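/- Under HER(p), the expectation of the degree variance V = (1/n) Σ_i (D_i − D̄)² equals (2(n−2)/n²) Σ_{i<j} p_{ij} + (2(n−4)/n²) Σ_{i<j<k} (p_{ij}p_{ik} + p_{ij}p_{jk} + p_{ik}p_{jk}) − (8/n²) Σ_{i<j<k<l} (p_{ij}p_{kl} + p_{ik}p_{jl} + p_{il}p_{jk}). -/

import Mathlib

/-!
With `S = ∑_{i,j} p_ij`, `Q = ∑_i (∑_j p_ij)²` and `R = ∑_{i,j} p_ij²`: the edges being independent
Bernoulli variables, `E[Y_ij Y_kl] = p_ij p_kl` unless `{i,j} = {k,l}`, when it is `p_ij`. Summing,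
`E[∑_i D_i²] = Q + S - R` and `E[(∑_i D_i)²] = S² + 2(S - R)`, and `V = ∑_i D_i² / n - (∑_i D_i)² / n²`.
The sorted sums of the statement are ordered sums over distinct indices divided by their symmetry:
`2 ∑_{i<j} p_ij = S`, `2 ∑_{i<j<k} (…) = Q - R` and `8 ∑_{i<j<k<l} (…) = S² - 4Q + 2R`, every factor 2
coming from halving a double sum that is symmetric under exchanging two indices.
-/

open MeasureTheory ProbabilityTheory Finset

section Sums

variable {α R : Type*} [Fintype α] [LinearOrder α]

theorem sum_sum_eq_sum_diag_add_two_mul_sum_sum_lt [NonAssocSemiring R] (f : α → α → R)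
    (hf : ∀ a b, f a b = f b a) :
    ∑ a, ∑ b, f a b = ∑ a, f a a + 2 * ∑ a, ∑ b, if a < b then f a b else 0 := by
  have trichotomy : ∀ a b, f a b = (if a = b then f a b else 0) + (if a < b then f a b else 0)
      + (if b < a then f b a else 0) := by
    intro a b
    rcases lt_trichotomy a b with h | rfl | h
    · simp [h, h.ne, h.not_gt]
    · simp
    · simp [h, h.ne', h.not_gt, hf a b]
  have swap : ∑ a, ∑ b, (if b < a then f b a else 0) = ∑ a, ∑ b, if a < b then f a b else 0 :=
    sum_comm
  simp only [sum_congr rfl fun a _ => sum_congr rfl fun b _ => trichotomy a b, sum_add_distrib,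
    swap, sum_ite_eq, mem_univ, if_true, two_mul, add_assoc]

theorem sum_ite_ne_and_ne [AddCommGroup R] {i j : α} (hij : i ≠ j) (g : α → R) :
    ∑ k, (if k ≠ i ∧ k ≠ j then g k else 0) = ∑ k, g k - g i - g j := by
  have split : ∀ k, g k = (if k ≠ i ∧ k ≠ j then g k else 0) + (if k = i then g k else 0)
      + (if k = j then g k else 0) := by
    grind
  simp only [sum_congr rfl fun k _ => split k, sum_add_distrib, sum_ite_eq', mem_univ, if_true]
  abel

end Sums

section SymmetricWeights

variable {α R : Type*} [Fintype α] [LinearOrder α] [CommRing R] {p : α → α → R}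

theorem two_mul_sum_sum_lt_eq_sum_sum (hp : ∀ i j, p i j = p j i) (hp0 : ∀ i, p i i = 0) :
    2 * ∑ i, ∑ j ∈ univ.filter (fun j => i < j), p i j = ∑ i, ∑ j, p i j := by
  simp [sum_sum_eq_sum_diag_add_two_mul_sum_sum_lt p hp, hp0, sum_filter]

theorem sum_sq_sum_eq_sum_sum_sq_add_two_mul_sum_sum_lt :
    ∑ i, (∑ j, p i j) ^ 2 =
      ∑ i, ∑ j, p i j ^ 2 + 2 * ∑ i, ∑ j, ∑ k, if j < k then p i j * p i k else 0 := by
  have row : ∀ i, (∑ j, p i j) ^ 2 =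
      ∑ j, p i j ^ 2 + 2 * ∑ j, ∑ k, if j < k then p i j * p i k else 0 := fun i => by
    simpa only [sq, Fintype.sum_mul_sum] using
      sum_sum_eq_sum_diag_add_two_mul_sum_sum_lt (fun j k => p i j * p i k) fun j k => mul_comm _ _
  simp only [row, sum_add_distrib, mul_sum]

theorem sum_sum_sum_lt_mul_eq_sum_sorted_triples (hp : ∀ i j, p i j = p j i)
    (hp0 : ∀ i, p i i = 0) :
    ∑ i, ∑ j, ∑ k, (if j < k then p i j * p i k else 0) =
      ∑ i, ∑ j ∈ univ.filter (fun j => i < j), ∑ k ∈ univ.filter (fun k => j < k),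
        (p i j * p i k + p i j * p j k + p i k * p j k) := by
  have center_middle : ∑ i, ∑ j, ∑ k, (if j < i ∧ i < k then p i j * p i k else 0) =
      ∑ i, ∑ j, ∑ k, if i < j ∧ j < k then p i j * p j k else 0 := by
    rw [sum_comm]
    refine sum_congr rfl fun i _ => sum_congr rfl fun j _ => sum_congr rfl fun k _ => ?_
    rw [hp j i]
  have center_last : ∑ i, ∑ j, ∑ k, (if j < k ∧ k < i then p i j * p i k else 0) =
      ∑ i, ∑ j, ∑ k, if i < j ∧ j < k then p i k * p j k else 0 := by
    rw [sum_comm]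
    refine sum_congr rfl fun i _ => ?_
    rw [sum_comm]
    refine sum_congr rfl fun j _ => sum_congr rfl fun k _ => ?_
    rw [hp k i, hp k j]
  calc ∑ i, ∑ j, ∑ k, (if j < k then p i j * p i k else 0)
      = ∑ i, ∑ j, ∑ k, ((if i < j ∧ j < k then p i j * p i k else 0)
          + (if j < i ∧ i < k then p i j * p i k else 0)
          + (if j < k ∧ k < i then p i j * p i k else 0)) := by
        refine sum_congr rfl fun i _ => sum_congr rfl fun j _ => sum_congr rfl fun k _ => ?_
        grind
    _ = ∑ i, ∑ j, ∑ k, (if i < j ∧ j < k then p i j * p i k else 0)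
          + ∑ i, ∑ j, ∑ k, (if i < j ∧ j < k then p i j * p j k else 0)
          + ∑ i, ∑ j, ∑ k, (if i < j ∧ j < k then p i k * p j k else 0) := by
        simp only [sum_add_distrib, center_middle, center_last]
    _ = _ := by
        simp only [← sum_add_distrib, sum_filter, Finset.ite_sum_zero]
        refine sum_congr rfl fun i _ => sum_congr rfl fun j _ => sum_congr rfl fun k _ => ?_
        grind

theorem two_mul_sum_sorted_triples (hp : ∀ i j, p i j = p j i) (hp0 : ∀ i, p i i = 0) :
    2 * ∑ i, ∑ j ∈ univ.filter (fun j => i < j), ∑ k ∈ univ.filter (fun k => j < k),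
        (p i j * p i k + p i j * p j k + p i k * p j k) =
      ∑ i, (∑ j, p i j) ^ 2 - ∑ i, ∑ j, p i j ^ 2 := by
  rw [← sum_sum_sum_lt_mul_eq_sum_sorted_triples hp hp0,
    sum_sq_sum_eq_sum_sum_sq_add_two_mul_sum_sum_lt]
  ring

theorem sum_ite_disjoint_mul_eq (hp : ∀ i j, p i j = p j i) (hp0 : ∀ i, p i i = 0) :
    ∑ i, ∑ j, ∑ k, ∑ l, (if (k ≠ i ∧ k ≠ j) ∧ (l ≠ i ∧ l ≠ j) then p i j * p k l else 0) =
      (∑ i, ∑ j, p i j) ^ 2 - 4 * ∑ i, (∑ j, p i j) ^ 2 + 2 * ∑ i, ∑ j, p i j ^ 2 := by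
  have col : ∀ i, ∑ k, p k i = ∑ k, p i k := fun i => sum_congr rfl fun k _ => hp k i
  have avoiding : ∀ i j, i ≠ j →
      ∑ k, ∑ l, (if (k ≠ i ∧ k ≠ j) ∧ (l ≠ i ∧ l ≠ j) then p k l else 0) =
        ∑ k, ∑ l, p k l - 2 * ∑ l, p i l - 2 * ∑ l, p j l + 2 * p i j := by
    intro i j hij
    have row : ∀ k, ∑ l, (if (k ≠ i ∧ k ≠ j) ∧ (l ≠ i ∧ l ≠ j) then p k l else 0) =
        if k ≠ i ∧ k ≠ j then ∑ l, p k l - p k i - p k j else 0 := by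
      intro k
      by_cases hk : k ≠ i ∧ k ≠ j
      · simp only [and_iff_right hk, if_pos hk, sum_ite_ne_and_ne hij]
      · simp only [hk, false_and, if_false, sum_const_zero]
    simp only [row, sum_ite_ne_and_ne hij, sum_sub_distrib, col, hp0, hp j i]
    ring
  have by_row : ∑ i, ∑ j, p i j * ∑ l, p i l = ∑ i, (∑ j, p i j) ^ 2 := by
    simp only [← sum_mul, sq]
  have by_col : ∑ i, ∑ j, p i j * ∑ l, p j l = ∑ i, (∑ j, p i j) ^ 2 := by
    rw [sum_comm]
    simp only [← sum_mul, col, sq]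
  have expand : ∀ i j, p i j * (∑ k, ∑ l, p k l - 2 * ∑ l, p i l - 2 * ∑ l, p j l + 2 * p i j)
      = (∑ k, ∑ l, p k l) * p i j - 2 * (p i j * ∑ l, p i l) - 2 * (p i j * ∑ l, p j l)
        + 2 * p i j ^ 2 := fun i j => by ring
  calc ∑ i, ∑ j, ∑ k, ∑ l, (if (k ≠ i ∧ k ≠ j) ∧ (l ≠ i ∧ l ≠ j) then p i j * p k l else 0)
      = ∑ i, ∑ j, p i j * (∑ k, ∑ l, p k l - 2 * ∑ l, p i l - 2 * ∑ l, p j l + 2 * p i j) := by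
        refine sum_congr rfl fun i _ => sum_congr rfl fun j _ => ?_
        obtain rfl | hij := eq_or_ne i j
        · simp [hp0]
        · rw [← avoiding i j hij]
          simp only [mul_sum, mul_ite, mul_zero]
    _ = _ := by
        simp only [expand, sum_add_distrib, sum_sub_distrib, ← mul_sum, by_row, by_col]
        ring

theorem sum_ite_disjoint_mul_eq_four_mul (hp : ∀ i j, p i j = p j i) (hp0 : ∀ i, p i i = 0) :
    ∑ i, ∑ j, ∑ k, ∑ l, (if (k ≠ i ∧ k ≠ j) ∧ (l ≠ i ∧ l ≠ j) then p i j * p k l else 0) =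
      4 * ∑ i, ∑ j, ∑ k, ∑ l,
        (if i < j ∧ k < l ∧ (k ≠ i ∧ k ≠ j) ∧ (l ≠ i ∧ l ≠ j) then p i j * p k l else 0) := by
  set G : α → α → α → α → R := fun i j k l =>
    if (k ≠ i ∧ k ≠ j) ∧ (l ≠ i ∧ l ≠ j) then p i j * p k l else 0 with hG
  have swap_ij : ∀ i j, ∑ k, ∑ l, G i j k l = ∑ k, ∑ l, G j i k l := fun i j =>
    sum_congr rfl fun k _ => sum_congr rfl fun l _ => by grind
  have halve_kl : ∀ i j, ∑ k, ∑ l, G i j k l = 2 * ∑ k, ∑ l, if k < l then G i j k l else 0 := by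
    intro i j
    rw [sum_sum_eq_sum_diag_add_two_mul_sum_sum_lt (G i j) fun k l => by grind]
    simp [hG, hp0]
  have diag : ∀ i k l, G i i k l = 0 := by simp [hG, hp0]
  rw [sum_sum_eq_sum_diag_add_two_mul_sum_sum_lt _ swap_ij]
  simp only [halve_kl, diag, sum_const_zero, zero_add, mul_sum]
  refine sum_congr rfl fun i _ => sum_congr rfl fun j _ => ?_
  by_cases hij : i < j
  · simp only [hij, if_true, true_and, mul_sum, hG]
    exact sum_congr rfl fun k _ => sum_congr rfl fun l _ => by grind
  · simp [hij]

theorem sum_ite_lt_disjoint_mul_eq_two_mul :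
    ∑ i, ∑ j, ∑ k, ∑ l,
        (if i < j ∧ k < l ∧ (k ≠ i ∧ k ≠ j) ∧ (l ≠ i ∧ l ≠ j) then p i j * p k l else 0) =
      2 * ∑ i, ∑ k, ∑ j, ∑ l,
        (if i < k ∧ i < j ∧ k < l ∧ (k ≠ i ∧ k ≠ j) ∧ (l ≠ i ∧ l ≠ j) then p i j * p k l
          else 0) := by
  set H : α → α → α → α → R := fun i j k l =>
    if i < j ∧ k < l ∧ (k ≠ i ∧ k ≠ j) ∧ (l ≠ i ∧ l ≠ j) then p i j * p k l else 0 with hH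
  have swap_pairs : ∀ i k, ∑ j, ∑ l, H i j k l = ∑ j, ∑ l, H k j i l := by
    intro i k
    rw [sum_comm]
    exact sum_congr rfl fun j _ => sum_congr rfl fun l _ => by grind
  have diag : ∀ i j l, H i j i l = 0 := by simp [hH]
  rw [sum_congr rfl fun i _ => sum_comm, sum_sum_eq_sum_diag_add_two_mul_sum_sum_lt _ swap_pairs]
  simp only [diag, sum_const_zero, zero_add]
  congr 1
  refine sum_congr rfl fun i _ => sum_congr rfl fun k _ => ?_
  by_cases hik : i < k
  · simp only [hik, if_true, true_and, hH]
  · simp [hik]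

theorem sum_ite_lt_disjoint_mul_eq_sum_sorted_quadruples :
    ∑ i, ∑ k, ∑ j, ∑ l,
        (if i < k ∧ i < j ∧ k < l ∧ (k ≠ i ∧ k ≠ j) ∧ (l ≠ i ∧ l ≠ j) then p i j * p k l
          else 0) =
      ∑ i, ∑ j ∈ univ.filter (fun j => i < j), ∑ k ∈ univ.filter (fun k => j < k),
        ∑ l ∈ univ.filter (fun l => k < l), (p i j * p k l + p i k * p j l + p i l * p j k) := by
  have first_pair_outer : ∑ i, ∑ k, ∑ j, ∑ l,
      (if i < j ∧ j < k ∧ k < l then p i j * p k l else 0) =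
        ∑ i, ∑ j, ∑ k, ∑ l, if i < j ∧ j < k ∧ k < l then p i j * p k l else 0 :=
    sum_congr rfl fun i _ => sum_comm
  have pairs_nested : ∑ i, ∑ k, ∑ j, ∑ l,
      (if i < k ∧ k < l ∧ l < j then p i j * p k l else 0) =
        ∑ i, ∑ j, ∑ k, ∑ l, if i < j ∧ j < k ∧ k < l then p i l * p j k else 0 :=
    sum_congr rfl fun i _ => sum_congr rfl fun k _ => sum_comm
  calc ∑ i, ∑ k, ∑ j, ∑ l,
        (if i < k ∧ i < j ∧ k < l ∧ (k ≠ i ∧ k ≠ j) ∧ (l ≠ i ∧ l ≠ j) then p i j * p k l else 0)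
      = ∑ i, ∑ k, ∑ j, ∑ l, ((if i < j ∧ j < k ∧ k < l then p i j * p k l else 0)
          + (if i < k ∧ k < j ∧ j < l then p i j * p k l else 0)
          + (if i < k ∧ k < l ∧ l < j then p i j * p k l else 0)) := by
        refine sum_congr rfl fun i _ => sum_congr rfl fun k _ =>
          sum_congr rfl fun j _ => sum_congr rfl fun l _ => ?_
        grind
    _ = ∑ i, ∑ j, ∑ k, ∑ l, (if i < j ∧ j < k ∧ k < l then p i j * p k l else 0)
          + ∑ i, ∑ j, ∑ k, ∑ l, (if i < j ∧ j < k ∧ k < l then p i k * p j l else 0)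
          + ∑ i, ∑ j, ∑ k, ∑ l, (if i < j ∧ j < k ∧ k < l then p i l * p j k else 0) := by
        simp only [sum_add_distrib, first_pair_outer, pairs_nested]
    _ = _ := by
        simp only [← sum_add_distrib, sum_filter, Finset.ite_sum_zero]
        refine sum_congr rfl fun i _ => sum_congr rfl fun j _ =>
          sum_congr rfl fun k _ => sum_congr rfl fun l _ => ?_
        grind

theorem eight_mul_sum_sorted_quadruples (hp : ∀ i j, p i j = p j i) (hp0 : ∀ i, p i i = 0) :
    8 * ∑ i, ∑ j ∈ univ.filter (fun j => i < j), ∑ k ∈ univ.filter (fun k => j < k),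
        ∑ l ∈ univ.filter (fun l => k < l), (p i j * p k l + p i k * p j l + p i l * p j k) =
      (∑ i, ∑ j, p i j) ^ 2 - 4 * ∑ i, (∑ j, p i j) ^ 2 + 2 * ∑ i, ∑ j, p i j ^ 2 := by
  rw [← sum_ite_disjoint_mul_eq hp hp0, sum_ite_disjoint_mul_eq_four_mul hp hp0,
    sum_ite_lt_disjoint_mul_eq_two_mul, sum_ite_lt_disjoint_mul_eq_sum_sorted_quadruples]
  ring

end SymmetricWeights

theorem mul_inv_sq_self {G₀ : Type*} [CommGroupWithZero G₀] (a : G₀) : a * a⁻¹ ^ 2 = a⁻¹ := by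
  rw [sq, ← mul_assoc, mul_comm a]
  simpa using mul_inv_mul_cancel a⁻¹

theorem one_div_card_mul_sum_sub_mean_sq {ι : Type*} (s : Finset ι) (f : ι → ℝ) :
    1 / (#s : ℝ) * ∑ i ∈ s, (f i - 1 / #s * ∑ j ∈ s, f j) ^ 2 =
      1 / #s * ∑ i ∈ s, f i ^ 2 - (1 / #s) ^ 2 * (∑ i ∈ s, f i) ^ 2 := by
  have expand : ∑ i ∈ s, (f i - 1 / #s * ∑ j ∈ s, f j) ^ 2 =
      ∑ i ∈ s, f i ^ 2 - 2 * (1 / #s) * (∑ i ∈ s, f i) ^ 2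
        + #s * (1 / #s) ^ 2 * (∑ i ∈ s, f i) ^ 2 := by
    simp only [sub_sq, sum_add_distrib, sum_sub_distrib, ← sum_mul, ← mul_sum, sum_const,
      nsmul_eq_mul]
    ring
  rw [expand]
  linear_combination (1 / #s * (∑ i ∈ s, f i) ^ 2) * mul_inv_sq_self (#s : ℝ)

section Moments

variable {Ω α : Type*} [MeasurableSpace Ω] {μ : Measure Ω}

theorem integrable_mul_of_zero_or_one [IsFiniteMeasure μ] {X Z : Ω → ℝ} (hX : Measurable X)
    (hZ : Measurable Z) (hX01 : ∀ ω, X ω = 0 ∨ X ω = 1) (hZ01 : ∀ ω, Z ω = 0 ∨ Z ω = 1) :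
    Integrable (fun ω => X ω * Z ω) μ :=
  Integrable.of_bound (hX.mul hZ).aestronglyMeasurable 1 <| ae_of_all _ fun ω => by
    rcases hX01 ω with h | h <;> rcases hZ01 ω with h' | h' <;> simp [h, h']

theorem integrable_sum_mul_sum {ι κ : Type*} (s : Finset ι) (t : Finset κ) (X : ι → Ω → ℝ)
    (Z : κ → Ω → ℝ) (h : ∀ a ∈ s, ∀ b ∈ t, Integrable (fun ω => X a ω * Z b ω) μ) :
    Integrable (fun ω => (∑ a ∈ s, X a ω) * ∑ b ∈ t, Z b ω) μ := by
  simp only [sum_mul_sum]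
  exact integrable_finsetSum _ fun a ha => integrable_finsetSum _ fun b hb => h a ha b hb

theorem integral_sum_mul_sum {ι κ : Type*} (s : Finset ι) (t : Finset κ) (X : ι → Ω → ℝ)
    (Z : κ → Ω → ℝ) (h : ∀ a ∈ s, ∀ b ∈ t, Integrable (fun ω => X a ω * Z b ω) μ) :
    ∫ ω, (∑ a ∈ s, X a ω) * (∑ b ∈ t, Z b ω) ∂μ = ∑ a ∈ s, ∑ b ∈ t, ∫ ω, X a ω * Z b ω ∂μ := by
  simp only [sum_mul_sum]
  rw [integral_finsetSum _ fun a ha => integrable_finsetSum _ fun b hb => h a ha b hb]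
  exact sum_congr rfl fun a ha => integral_finsetSum _ fun b hb => h a ha b hb

variable [LinearOrder α] {Y : α → α → Ω → ℝ} {p : α → α → ℝ}

structure IsHER (μ : Measure Ω) (Y : α → α → Ω → ℝ) (p : α → α → ℝ) : Prop where
  symm : ∀ i j, Y i j = Y j i
  diag : ∀ i, Y i i = 0
  prob_symm : ∀ i j, p i j = p j i
  prob_diag : ∀ i, p i i = 0
  measurable : ∀ i j, Measurable (Y i j)
  zero_or_one : ∀ i j ω, Y i j ω = 0 ∨ Y i j ω = 1
  integral_eq : ∀ i j, i ≠ j → ∫ ω, Y i j ω ∂μ = p i j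
  iIndepFun : iIndepFun (fun e : {e : α × α // e.1 < e.2} => Y e.1.1 e.1.2) μ

def degree [Fintype α] (Y : α → α → Ω → ℝ) (i : α) (ω : Ω) : ℝ := ∑ j, Y i j ω

theorem integral_edge_mul_edge_of_lt (hmeas : ∀ i j, Measurable (Y i j))
    (h01 : ∀ i j ω, Y i j ω = 0 ∨ Y i j ω = 1) (hmean : ∀ i j, i ≠ j → ∫ ω, Y i j ω ∂μ = p i j)
    (hindep : iIndepFun (fun e : {e : α × α // e.1 < e.2} => Y e.1.1 e.1.2) μ)
    {i j k l : α} (hij : i < j) (hkl : k < l) :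
    ∫ ω, Y i j ω * Y k l ω ∂μ = p i j * p k l + if i = k ∧ j = l then p i j - p i j ^ 2 else 0 := by
  by_cases hsame : i = k ∧ j = l
  · obtain ⟨rfl, rfl⟩ := hsame
    have idem : ∀ ω, Y i j ω * Y i j ω = Y i j ω := fun ω => by
      rcases h01 i j ω with h | h <;> simp [h]
    simp only [idem, hmean i j hij.ne, and_self, if_true]
    ring
  · have hne : (⟨(i, j), hij⟩ : {e : α × α // e.1 < e.2}) ≠ ⟨(k, l), hkl⟩ := fun h =>
      hsame (by simpa using h)
    rw [(hindep.indepFun hne).integral_fun_mul_eq_mul_integral (hmeas i j).aestronglyMeasurable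
      (hmeas k l).aestronglyMeasurable, if_neg hsame, hmean i j hij.ne, hmean k l hkl.ne, add_zero]

namespace IsHER

theorem integral_edge_mul_edge (hY : IsHER μ Y p) (i j k l : α) :
    ∫ ω, Y i j ω * Y k l ω ∂μ = p i j * p k l + (if i = k ∧ j = l then p i j - p i j ^ 2 else 0)
      + (if i = l ∧ j = k then p i j - p i j ^ 2 else 0) := by
  have sorted {a b c d : α} (hab : a < b) (hcd : c < d) :=
    integral_edge_mul_edge_of_lt (μ := μ) (p := p) hY.measurable hY.zero_or_one hY.integral_eq
      hY.iIndepFun hab hcd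
  have hp := hY.prob_symm
  obtain rfl | hij := eq_or_ne i j
  · simp [hY.diag, hY.prob_diag]
  obtain rfl | hkl := eq_or_ne k l
  · simp only [hY.diag, Pi.zero_apply, mul_zero, integral_zero, hY.prob_diag, zero_add]
    grind
  rcases hij.lt_or_gt with hij | hij <;> rcases hkl.lt_or_gt with hkl | hkl
  · rw [sorted hij hkl]; grind
  · rw [hY.symm k l, sorted hij hkl]; grind
  · rw [hY.symm i j, sorted hij hkl]; grind
  · rw [hY.symm i j, hY.symm k l, sorted hij hkl]; grind

theorem integrable_edge_mul_edge [IsFiniteMeasure μ] (hY : IsHER μ Y p) (i j k l : α) :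
    Integrable (fun ω => Y i j ω * Y k l ω) μ :=
  integrable_mul_of_zero_or_one (hY.measurable i j) (hY.measurable k l) (hY.zero_or_one i j)
    (hY.zero_or_one k l)

variable [Fintype α] [IsFiniteMeasure μ]

theorem integrable_degree_mul_degree (hY : IsHER μ Y p) (i k : α) :
    Integrable (fun ω => degree Y i ω * degree Y k ω) μ :=
  integrable_sum_mul_sum _ _ _ _ fun j _ l _ => hY.integrable_edge_mul_edge i j k l

theorem integral_degree_mul_degree (hY : IsHER μ Y p) (i k : α) :
    ∫ ω, degree Y i ω * degree Y k ω ∂μ =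
      (∑ j, p i j) * (∑ l, p k l) + (p i k - p i k ^ 2)
        + if i = k then ∑ j, (p i j - p i j ^ 2) else 0 := by
  have same_edge : ∀ j, ∑ l, (if i = k ∧ j = l then p i j - p i j ^ 2 else 0) =
      if i = k then p i j - p i j ^ 2 else 0 := fun j => by
    by_cases h : i = k <;> simp [h]
  have reversed_edge : ∀ j, ∑ l, (if i = l ∧ j = k then p i j - p i j ^ 2 else 0) =
      if j = k then p i j - p i j ^ 2 else 0 := fun j => by
    by_cases h : j = k <;> simp [h]
  unfold degree
  rw [integral_sum_mul_sum _ _ _ _ fun j _ l _ => hY.integrable_edge_mul_edge i j k l]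
  simp only [hY.integral_edge_mul_edge, sum_add_distrib, sum_mul_sum, same_edge, reversed_edge,
    sum_ite_irrel, sum_const_zero, sum_ite_eq', mem_univ, if_true]
  ring

theorem integral_sum_degree_sq (hY : IsHER μ Y p) :
    ∫ ω, ∑ i, degree Y i ω ^ 2 ∂μ =
      ∑ i, (∑ j, p i j) ^ 2 + ∑ i, ∑ j, p i j - ∑ i, ∑ j, p i j ^ 2 := by
  have diagonal : ∀ i, ∫ ω, degree Y i ω * degree Y i ω ∂μ =
      (∑ j, p i j) ^ 2 + ∑ j, (p i j - p i j ^ 2) := fun i => by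
    rw [hY.integral_degree_mul_degree, if_pos rfl, hY.prob_diag]
    ring
  simp only [sq (degree Y _ _)]
  rw [integral_finsetSum _ fun i _ => hY.integrable_degree_mul_degree i i]
  simp only [diagonal, sum_add_distrib, sum_sub_distrib]
  ring

theorem integral_sq_sum_degree (hY : IsHER μ Y p) :
    ∫ ω, (∑ i, degree Y i ω) ^ 2 ∂μ =
      (∑ i, ∑ j, p i j) ^ 2 + 2 * (∑ i, ∑ j, p i j - ∑ i, ∑ j, p i j ^ 2) := by
  simp only [sq (∑ i, degree Y i _)]
  rw [integral_sum_mul_sum _ _ _ _ fun i _ k _ => hY.integrable_degree_mul_degree i k]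
  simp only [hY.integral_degree_mul_degree, sum_add_distrib, sum_sub_distrib, sum_ite_eq,
    mem_univ, if_true, ← mul_sum, ← sum_mul]
  ring

end IsHER

end Moments

/-- Expectation of the degree variance under HER(p). -/
theorem her_degree_variance_expectation
    {Ω : Type*} [MeasurableSpace Ω] (μ : Measure Ω) [IsProbabilityMeasure μ]
    (n : ℕ) (Y : Fin n → Fin n → Ω → ℝ) (p : Fin n → Fin n → ℝ)
    (hYsym : ∀ i j, Y i j = Y j i) (hYdiag : ∀ i, Y i i = 0)
    (hpsym : ∀ i j, p i j = p j i) (hpdiag : ∀ i, p i i = 0)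
    (hmeas : ∀ i j, Measurable (Y i j))
    (h01 : ∀ i j ω, Y i j ω = 0 ∨ Y i j ω = 1)
    (hmean : ∀ i j, i ≠ j → ∫ ω, Y i j ω ∂μ = p i j)
    (hindep : iIndepFun
      (fun e : {e : Fin n × Fin n // e.1 < e.2} => Y e.1.1 e.1.2) μ) :
    ∫ ω, (1 / (n : ℝ)) * ∑ i,
        ((∑ j ∈ univ.filter (fun j => j ≠ i), Y i j ω)
          - (1 / (n : ℝ)) * ∑ i', ∑ j ∈ univ.filter (fun j => j ≠ i'), Y i' j ω) ^ 2 ∂μ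
    = (2 * ((n : ℝ) - 2) / (n : ℝ) ^ 2) * (∑ i, ∑ j ∈ univ.filter (fun j => i < j), p i j)
      + (2 * ((n : ℝ) - 4) / (n : ℝ) ^ 2) *
        (∑ i, ∑ j ∈ univ.filter (fun j => i < j), ∑ k ∈ univ.filter (fun k => j < k),
          (p i j * p i k + p i j * p j k + p i k * p j k))
      - (8 / (n : ℝ) ^ 2) *
        (∑ i, ∑ j ∈ univ.filter (fun j => i < j), ∑ k ∈ univ.filter (fun k => j < k),
          ∑ l ∈ univ.filter (fun l => k < l),
          (p i j * p k l + p i k * p j l + p i l * p j k)) := by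
  have hY : IsHER μ Y p := ⟨hYsym, hYdiag, hpsym, hpdiag, hmeas, h01, hmean, hindep⟩
  have hdegree : ∀ i ω, ∑ j ∈ univ.filter (fun j => j ≠ i), Y i j ω = degree Y i ω :=
    fun i ω => sum_filter_of_ne fun j _ hj => by rintro rfl; exact hj (congrFun (hYdiag j) ω)
  have hvariance := fun ω => one_div_card_mul_sum_sub_mean_sq univ fun i => degree Y i ω
  simp only [card_univ, Fintype.card_fin] at hvariance
  have int_sum_sq : Integrable (fun ω => ∑ i, degree Y i ω ^ 2) μ :=
    integrable_finsetSum _ fun i _ => by simpa only [sq] using hY.integrable_degree_mul_degree i i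
  have int_sq_sum : Integrable (fun ω => (∑ i, degree Y i ω) ^ 2) μ := by
    simpa only [sq] using integrable_sum_mul_sum univ univ (fun i => degree Y i)
      (fun i => degree Y i) fun i _ k _ => hY.integrable_degree_mul_degree i k
  simp only [hdegree, hvariance]
  rw [integral_sub (int_sum_sq.const_mul _) (int_sq_sum.const_mul _), integral_const_mul,
    integral_const_mul, hY.integral_sum_degree_sq, hY.integral_sq_sum_degree]
  linear_combination (-((n : ℝ) - 2) / n ^ 2) * two_mul_sum_sum_lt_eq_sum_sum hpsym hpdiag
    + (-((n : ℝ) - 4) / n ^ 2) * two_mul_sum_sorted_triples hpsym hpdiag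
    + (1 / (n : ℝ) ^ 2) * eight_mul_sum_sorted_quadruples hpsym hpdiag
    + (∑ i, (∑ j, p i j) ^ 2 + ∑ i, ∑ j, p i j - ∑ i, ∑ j, p i j ^ 2)
      * (mul_inv_sq_self (n : ℝ)).symm
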